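/- arXiv:2603.21026 — 7 statements merged into one kernel-verified Lean document; each statement's English description precedes it below -/
import Mathlib

section
/- Let g ∈ ℂ^N. The collection {T_i g : 1 ≤ i ≤ N} is an orthonormal basis of ℂ^N if and only if |ĝ(l)| = 1/√N for all 1 ≤ l ≤ N. -/
open scoped ComplexConjugate BigOperators

/-- Graph Fourier transform: `(gft χ f) l = ⟨f, χ_l⟩ = ∑ n, f n * conj (χ l n)`. -/
noncomputable def gft {N : ℕ} (χ : Fin N → EuclideanSpace ℂ (Fin N))
    (f : EuclideanSpace ℂ (Fin N)) : EuclideanSpace ℂ (Fin N) :=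
  WithLp.toLp 2 (fun l => ∑ n, f n * conj (χ l n))

/-- Generalized translation: `(T_i f)(n) = √N · ∑ l, f̂(l) · conj (χ l i) · χ l n`. -/
noncomputable def gtrans {N : ℕ} (χ : Fin N → EuclideanSpace ℂ (Fin N))
    (i : Fin N) (f : EuclideanSpace ℂ (Fin N)) : EuclideanSpace ℂ (Fin N) :=
  WithLp.toLp 2 (fun n => (Real.sqrt N : ℂ) * ∑ l, gft χ f l * conj (χ l i) * χ l n)

/-!
Let `U` be the matrix whose columns are the `χ l`; orthonormality of the `χ l` says `Uᴴ U = 1`,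
hence `U` is unitary. The matrix whose columns are the translates `T_i g` is
`√N • U * diagonal ĝ * Uᴴ`, so their Gram matrix is `U * diagonal (N |ĝ l|²) * Uᴴ`. Conjugating by
`U`, this is the identity exactly when `N |ĝ l|² = 1` for every `l`. Finally, `N` orthonormal
vectors in `ℂ^N` automatically span it.
-/

open Matrix

def columnMatrix {𝕜 ι κ : Type*} (v : κ → EuclideanSpace 𝕜 ι) : Matrix ι κ 𝕜 :=
  of fun n i => v i n

section ColumnMatrix

variable {𝕜 ι κ : Type*} [RCLike 𝕜] [Fintype ι]

theorem gram_eq_conjTranspose_columnMatrix_mul (v : κ → EuclideanSpace 𝕜 ι) :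
    gram 𝕜 v = (columnMatrix v)ᴴ * columnMatrix v := by
  simpa [columnMatrix] using gram_eq_conjTranspose_mul (EuclideanSpace.basisFun ι 𝕜) v

theorem orthonormal_iff_conjTranspose_columnMatrix_mul [DecidableEq κ]
    {v : κ → EuclideanSpace 𝕜 ι} :
    Orthonormal 𝕜 v ↔ (columnMatrix v)ᴴ * columnMatrix v = 1 := by
  rw [← gram_eq_one_iff_orthonormal, gram_eq_conjTranspose_columnMatrix_mul]

end ColumnMatrix

theorem Matrix.mul_mul_conjTranspose_eq_one_iff {n R : Type*} [Fintype n] [DecidableEq n]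
    [CommRing R] [StarRing R] {U A : Matrix n n R} (hU : Uᴴ * U = 1) :
    U * A * Uᴴ = 1 ↔ A = 1 := by
  constructor
  · intro h
    calc A = Uᴴ * U * A * (Uᴴ * U) := by rw [hU, Matrix.one_mul, Matrix.mul_one]
      _ = Uᴴ * (U * A * Uᴴ) * U := by simp only [Matrix.mul_assoc]
      _ = 1 := by rw [h, Matrix.mul_one, hU]
  · rintro rfl
    rw [Matrix.mul_one, mul_eq_one_comm.mp hU]

theorem mul_sq_eq_one_iff_eq_one_div_sqrt {a r : ℝ} (ha : 0 < a) (hr : 0 ≤ r) :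
    a * r ^ 2 = 1 ↔ r = 1 / √a := by
  rw [one_div, ← Real.sqrt_inv, eq_comm (a := r), Real.sqrt_eq_iff_eq_sq (inv_nonneg.2 ha.le) hr,
    mul_eq_one_iff_inv_eq₀ ha.ne']

section Translation

variable {N : ℕ} (χ : Fin N → EuclideanSpace ℂ (Fin N)) (g : EuclideanSpace ℂ (Fin N))

theorem columnMatrix_gtrans :
    columnMatrix (fun i => gtrans χ i g) =
      (√N : ℂ) • (columnMatrix χ * diagonal (gft χ g) * (columnMatrix χ)ᴴ) := by
  ext n i
  simp [columnMatrix, gtrans, mul_apply, diagonal, Finset.mul_sum, mul_comm, mul_assoc]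

theorem gram_gtrans (hχ : Orthonormal ℂ χ) :
    gram ℂ (fun i => gtrans χ i g) =
      columnMatrix χ * diagonal (fun l => (N * ‖gft χ g l‖ ^ 2 : ℂ)) * (columnMatrix χ)ᴴ := by
  have hU := orthonormal_iff_conjTranspose_columnMatrix_mul.mp hχ
  have hN : star (√N : ℂ) * √N = N := by
    rw [Complex.star_def, Complex.conj_ofReal, ← Complex.ofReal_mul,
      Real.mul_self_sqrt N.cast_nonneg, Complex.ofReal_natCast]
  have hD : diagonal (fun l => (N * ‖gft χ g l‖ ^ 2 : ℂ)) =
      (N : ℂ) • (diagonal (star ⇑(gft χ g)) * diagonal (gft χ g)) := by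
    rw [diagonal_mul_diagonal, ← diagonal_smul]
    congr 1
    funext l
    simp [Complex.conj_mul']
  rw [gram_eq_conjTranspose_columnMatrix_mul, columnMatrix_gtrans, hD]
  simp only [conjTranspose_smul, conjTranspose_mul, conjTranspose_conjTranspose,
    diagonal_conjTranspose, smul_mul_smul, Matrix.mul_assoc, hN]
  rw [← Matrix.mul_assoc _ (columnMatrix χ), hU, Matrix.one_mul]
  simp only [Matrix.smul_mul, Matrix.mul_smul, Matrix.mul_assoc]

end Translation

theorem translates_orthonormal_basis_iff_general {N : ℕ}
    (χ : Fin N → EuclideanSpace ℂ (Fin N)) (hχ : Orthonormal ℂ χ)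
    (g : EuclideanSpace ℂ (Fin N)) :
    (Orthonormal ℂ (fun i => gtrans χ i g) ∧
      Submodule.span ℂ (Set.range fun i => gtrans χ i g) = ⊤) ↔
    (∀ l : Fin N, ‖gft χ g l‖ = 1 / Real.sqrt N) := by
  have hU := orthonormal_iff_conjTranspose_columnMatrix_mul.mp hχ
  rw [and_iff_left_of_imp fun h => h.linearIndependent.span_eq_top_of_card_eq_finrank' (by simp),
    ← gram_eq_one_iff_orthonormal, gram_gtrans χ g hχ, mul_mul_conjTranspose_eq_one_iff hU,
    ← diagonal_one, diagonal_eq_diagonal_iff]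
  refine forall_congr' fun l => ?_
  rw [← mul_sq_eq_one_iff_eq_one_div_sqrt (Nat.cast_pos.2 l.pos) (norm_nonneg _)]
  exact_mod_cast Iff.rfl

/-- `{T_i g : 1 ≤ i ≤ N}` is an orthonormal basis of `ℂ^N` iff `|ĝ(l)| = 1/√N` for all `l`. -/
theorem translates_orthonormal_basis_iff {N : ℕ} (hN : 0 < N)
    (χ : Fin N → EuclideanSpace ℂ (Fin N)) (hχ : Orthonormal ℂ χ)
    (hspan : Submodule.span ℂ (Set.range χ) = ⊤)
    (g : EuclideanSpace ℂ (Fin N)) :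
    (Orthonormal ℂ (fun i => gtrans χ i g) ∧
      Submodule.span ℂ (Set.range fun i => gtrans χ i g) = ⊤) ↔
    (∀ l : Fin N, ‖gft χ g l‖ = 1 / Real.sqrt N) :=
  translates_orthonormal_basis_iff_general χ hχ g
end

section
/- Let g ∈ ℂ^N, let χ denote the N×N complex matrix whose l-th column is χ_l, and let ĝ(A) := χ · diag(ĝ(1), …, ĝ(N)) · χ* (where χ* is the conjugate transpose). Then {T_i g : 1 ≤ i ≤ N} is an orthonormal basis of ℂ^N if and only if the matrix √N · ĝ(A) is unitary. -/
/-!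
The translate `T_i g` is the `i`-th column of `√N · ĝ(A)`, and a square matrix is unitary exactly
when its columns are orthonormal; `N` orthonormal vectors in `ℂ^N` span it automatically.
-/

open scoped ComplexConjugate BigOperators

open scoped Matrix

theorem Matrix.orthonormal_cols_iff_mem_unitaryGroup {𝕜 n : Type*} [RCLike 𝕜] [Fintype n]
    [DecidableEq n] (U : Matrix n n 𝕜) :
    Orthonormal 𝕜 (fun j => WithLp.toLp 2 (Uᵀ j) : n → EuclideanSpace 𝕜 n) ↔
      U ∈ unitaryGroup n 𝕜 := by
  rw [orthonormal_iff_ite, mem_unitaryGroup_iff', ← Matrix.ext_iff]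
  refine forall₂_congr fun i j => ?_
  rw [EuclideanSpace.inner_toLp_toLp, mul_apply, one_apply, dotProduct]
  simp only [transpose_apply, Pi.star_apply, star_apply, mul_comm]

theorem gtrans_apply {N : ℕ} (χ : Fin N → EuclideanSpace ℂ (Fin N))
    (i : Fin N) (f : EuclideanSpace ℂ (Fin N)) (n : Fin N) :
    gtrans χ i f n = ((Real.sqrt N : ℂ) • (Matrix.of (fun n l => χ l n) *
      Matrix.diagonal (fun l => gft χ f l) * (Matrix.of (fun n l => χ l n))ᴴ)) n i := by
  rw [Matrix.smul_apply, Matrix.mul_apply]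
  simp only [gtrans, PiLp.toLp_apply, smul_eq_mul, Matrix.mul_diagonal,
    Matrix.conjTranspose_apply, Matrix.of_apply, RCLike.star_def]
  congr 1
  exact Finset.sum_congr rfl fun l _ => by ring

theorem translates_orthonormal_basis_iff_unitary_general {N : ℕ}
    (χ : Fin N → EuclideanSpace ℂ (Fin N))
    (g : EuclideanSpace ℂ (Fin N))
    (X : Matrix (Fin N) (Fin N) ℂ) (hX : ∀ n l : Fin N, X n l = χ l n)
    (gA : Matrix (Fin N) (Fin N) ℂ)
    (hgA : gA = X * Matrix.diagonal (fun l => gft χ g l) * X.conjTranspose) :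
    (Orthonormal ℂ (fun i => gtrans χ i g) ∧
      Submodule.span ℂ (Set.range fun i => gtrans χ i g) = ⊤) ↔
    (Real.sqrt N : ℂ) • gA ∈ Matrix.unitaryGroup (Fin N) ℂ := by
  obtain rfl : X = Matrix.of fun n l => χ l n := Matrix.ext hX
  have hcols :
      (fun i => gtrans χ i g) = fun i => WithLp.toLp 2 (((Real.sqrt N : ℂ) • gA)ᵀ i) := by
    ext i n
    rw [gtrans_apply, hgA]
    rfl
  rw [hcols, ← Matrix.orthonormal_cols_iff_mem_unitaryGroup, and_iff_left_iff_imp]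
  exact fun hU => hU.linearIndependent.span_eq_top_of_card_eq_finrank' (by simp)

/-- `{T_i g : 1 ≤ i ≤ N}` is an orthonormal basis of `ℂ^N` iff the matrix `√N · ĝ(A)`
is unitary, where `ĝ(A) = χ · diag(ĝ) · χ*`. -/
theorem translates_orthonormal_basis_iff_unitary {N : ℕ} (hN : 0 < N)
    (χ : Fin N → EuclideanSpace ℂ (Fin N)) (hχ : Orthonormal ℂ χ)
    (hspan : Submodule.span ℂ (Set.range χ) = ⊤)
    (g : EuclideanSpace ℂ (Fin N))
    (X : Matrix (Fin N) (Fin N) ℂ) (hX : ∀ n l : Fin N, X n l = χ l n)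
    (gA : Matrix (Fin N) (Fin N) ℂ)
    (hgA : gA = X * Matrix.diagonal (fun l => gft χ g l) * X.conjTranspose) :
    (Orthonormal ℂ (fun i => gtrans χ i g) ∧
      Submodule.span ℂ (Set.range fun i => gtrans χ i g) = ⊤) ↔
    (Real.sqrt N : ℂ) • gA ∈ Matrix.unitaryGroup (Fin N) ℂ :=
  translates_orthonormal_basis_iff_unitary_general χ g X hX gA hgA
end

section
/- Let g, h ∈ ℂ^N. The collections {T_i g : 1 ≤ i ≤ N} and {T_j h : 1 ≤ j ≤ N} are biorthogonal, i.e. ⟨T_i g, T_j h⟩ = δ_{ij} for all 1 ≤ i, j ≤ N, if and only if N · conj(ĝ(l)) · ĥ(l) = 1 for all 1 ≤ l ≤ N. -/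
open scoped ComplexConjugate BigOperators

/-!
With `U` the matrix whose rows are the `χ l`, the translate is
`T_i f = √N • ∑ l, (f̂ l * conj (χ l i)) • χ l`, so orthonormality of the `χ l` turns the Gram
matrix `(⟨T_j h, T_i g⟩)_{ij}` into `Uᴴ * D * U` with `D` diagonal with entries
`N * ĝ l * conj (ĥ l)`. Rows of a square matrix being orthonormal makes `U` unitary, and
conjugation by a unitary fixes only `1`; hence the Gram matrix is `1` iff `D = 1`.
-/

open Matrix

theorem Unitary.star_mul_mul_eq_one_iff {R : Type*} [Monoid R] [StarMul R] {U : R}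
    (hU : U ∈ unitary R) (A : R) : star U * A * U = 1 ↔ A = 1 := by
  refine ⟨fun h => ?_, fun h => by rw [h, mul_one, Unitary.star_mul_self_of_mem hU]⟩
  calc A = U * star U * A * (U * star U) := by
        rw [Unitary.mul_star_self_of_mem hU, one_mul, mul_one]
    _ = U * (star U * A * U) * star U := by simp only [mul_assoc]
    _ = 1 := by rw [h, mul_one, Unitary.mul_star_self_of_mem hU]

theorem Matrix.of_mem_unitaryGroup_of_orthonormal {n : Type*} [Fintype n] [DecidableEq n]
    {χ : n → EuclideanSpace ℂ n} (hχ : Orthonormal ℂ χ) :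
    of (fun l k => χ l k) ∈ unitaryGroup n ℂ := by
  rw [mem_unitaryGroup_iff]
  ext l m
  have := orthonormal_iff_ite.mp hχ m l
  simpa [mul_apply, PiLp.inner_apply, one_apply, eq_comm, mul_comm] using this

theorem gtrans_eq_sum {N : ℕ} (χ : Fin N → EuclideanSpace ℂ (Fin N)) (i : Fin N)
    (f : EuclideanSpace ℂ (Fin N)) :
    gtrans χ i f = (Real.sqrt N : ℂ) • ∑ l, (gft χ f l * conj (χ l i)) • χ l := by
  ext n
  simp [gtrans, Finset.mul_sum]

theorem sum_gtrans_mul_conj_gtrans {N : ℕ} {χ : Fin N → EuclideanSpace ℂ (Fin N)}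
    (hχ : Orthonormal ℂ χ) (g h : EuclideanSpace ℂ (Fin N)) (i j : Fin N) :
    ∑ n, gtrans χ i g n * conj (gtrans χ j h n) =
      (star (of fun l k => χ l k) *
        diagonal (star fun l => (N : ℂ) * conj (gft χ g l) * gft χ h l) *
        of fun l k => χ l k) i j := by
  have hsqrt : conj (Real.sqrt N : ℂ) * Real.sqrt N = N := by
    rw [Complex.conj_ofReal, ← Complex.ofReal_mul, Real.mul_self_sqrt N.cast_nonneg,
      Complex.ofReal_natCast]
  calc ∑ n, gtrans χ i g n * conj (gtrans χ j h n)
      = inner ℂ (gtrans χ j h) (gtrans χ i g) := by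
        simp [PiLp.inner_apply]
    _ = ∑ l, N * conj (gft χ h l * conj (χ l j)) * (gft χ g l * conj (χ l i)) := by
        rw [gtrans_eq_sum, gtrans_eq_sum, inner_smul_left, inner_smul_right, hχ.inner_sum,
          ← mul_assoc, hsqrt, Finset.mul_sum]
        simp only [mul_assoc]
    _ = _ := by
        rw [mul_apply]
        refine Finset.sum_congr rfl fun l _ => ?_
        simp only [mul_diagonal, star_apply, Pi.star_apply, of_apply, RCLike.star_def, map_mul,
          map_natCast, Complex.conj_conj]
        ring

theorem translates_biorthogonal_iff_general {N : ℕ}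
    (χ : Fin N → EuclideanSpace ℂ (Fin N)) (hχ : Orthonormal ℂ χ)
    (g h : EuclideanSpace ℂ (Fin N)) :
    (∀ i j : Fin N, (∑ n, gtrans χ i g n * conj (gtrans χ j h n)) =
        if i = j then 1 else 0) ↔
    (∀ l : Fin N, (N : ℂ) * conj (gft χ g l) * gft χ h l = 1) := by
  simp_rw [sum_gtrans_mul_conj_gtrans hχ, ← one_apply]
  rw [ext_iff, Unitary.star_mul_mul_eq_one_iff (of_mem_unitaryGroup_of_orthonormal hχ),
    diagonal_eq_one, star_eq_iff_star_eq, star_one, eq_comm, funext_iff]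
  simp only [Pi.one_apply]

/-- `{T_i g}` and `{T_j h}` are biorthogonal iff `N · conj(ĝ(l)) · ĥ(l) = 1` for all `l`. -/
theorem translates_biorthogonal_iff {N : ℕ} (hN : 0 < N)
    (χ : Fin N → EuclideanSpace ℂ (Fin N)) (hχ : Orthonormal ℂ χ)
    (hspan : Submodule.span ℂ (Set.range χ) = ⊤)
    (g h : EuclideanSpace ℂ (Fin N)) :
    (∀ i j : Fin N, (∑ n, gtrans χ i g n * conj (gtrans χ j h n)) =
        if i = j then 1 else 0) ↔
    (∀ l : Fin N, (N : ℂ) * conj (gft χ g l) * gft χ h l = 1) :=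
  translates_biorthogonal_iff_general χ hχ g h
end

section
/- Let g ∈ ℂ^N be such that |ĝ(l)| = 1/√N for all 1 ≤ l ≤ N. Then for every m ≤ N, the collection {T_i g : 1 ≤ i ≤ m} is an orthonormal system in ℂ^N. -/
open scoped ComplexConjugate BigOperators

/-!
Expanding in the basis, `T_i g = √N ∑_l ĝ(l) conj(χ_l(i)) χ_l`, so
`⟪T_i g, T_j g⟫ = ∑_l N |ĝ(l)|² χ_l(i) conj(χ_l(j))`. When `N |ĝ(l)|² = 1` this is the inner
product of the `i`-th and `j`-th columns of the unitary matrix whose rows are the `χ_l`, hence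
`δ_ij`.
-/

/-- `N` orthonormal vectors of `𝕜^N` form a unitary matrix, so its columns are orthonormal too. -/
theorem Orthonormal.sum_apply_mul_conj_apply {𝕜 ι : Type*} [RCLike 𝕜] [Fintype ι]
    [DecidableEq ι] {χ : ι → EuclideanSpace 𝕜 ι} (hχ : Orthonormal 𝕜 χ) (i j : ι) :
    ∑ l, χ l i * conj (χ l j) = if i = j then 1 else 0 := by
  let b : OrthonormalBasis ι 𝕜 (EuclideanSpace 𝕜 ι) :=
    .mk hχ (hχ.linearIndependent.span_eq_top_of_card_eq_finrank' (by simp)).ge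
  have parseval :=
    b.sum_inner_mul_inner (EuclideanSpace.single i (1 : 𝕜)) (EuclideanSpace.single j 1)
  simp only [b, OrthonormalBasis.coe_mk, EuclideanSpace.inner_single_left,
    EuclideanSpace.inner_single_right, map_one, one_mul] at parseval
  rw [parseval, PiLp.single_apply, apply_ite conj, map_one, map_zero]
  exact if_congr eq_comm rfl rfl

theorem gtrans_eq_sum_smul {N : ℕ} (χ : Fin N → EuclideanSpace ℂ (Fin N)) (i : Fin N)
    (f : EuclideanSpace ℂ (Fin N)) :
    gtrans χ i f = ∑ l, ((Real.sqrt N : ℂ) * gft χ f l * conj (χ l i)) • χ l := by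
  ext n
  simp only [gtrans, PiLp.toLp_apply, WithLp.ofLp_sum, WithLp.ofLp_smul, Finset.sum_apply,
    Pi.smul_apply, smul_eq_mul, Finset.mul_sum]
  exact Finset.sum_congr rfl fun l _ => by ring

theorem inner_gtrans_gtrans {N : ℕ} {χ : Fin N → EuclideanSpace ℂ (Fin N)}
    (hχ : Orthonormal ℂ χ) (f : EuclideanSpace ℂ (Fin N)) (i j : Fin N) :
    inner ℂ (gtrans χ i f) (gtrans χ j f) =
      ∑ l, (N * ‖gft χ f l‖ ^ 2 : ℂ) * (χ l i * conj (χ l j)) := by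
  rw [gtrans_eq_sum_smul, gtrans_eq_sum_smul, hχ.inner_sum]
  refine Finset.sum_congr rfl fun l _ => ?_
  have hsqrt : (Real.sqrt N : ℂ) * Real.sqrt N = N := by
    rw [← Complex.ofReal_mul, Real.mul_self_sqrt (Nat.cast_nonneg N), Complex.ofReal_natCast]
  rw [← Complex.conj_mul', ← hsqrt]
  simp only [map_mul, Complex.conj_ofReal, Complex.conj_conj]
  ring

theorem orthonormal_gtrans {N : ℕ} {χ : Fin N → EuclideanSpace ℂ (Fin N)}
    (hχ : Orthonormal ℂ χ) {g : EuclideanSpace ℂ (Fin N)}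
    (hg : ∀ l : Fin N, ‖gft χ g l‖ = 1 / Real.sqrt N) :
    Orthonormal ℂ (fun i => gtrans χ i g) := by
  have hcoeff (l : Fin N) : (N * ‖gft χ g l‖ ^ 2 : ℂ) = 1 := by
    have hN : (N : ℝ) ≠ 0 := by exact_mod_cast (Fin.pos l).ne'
    have : (N : ℝ) * ‖gft χ g l‖ ^ 2 = 1 := by
      rw [hg l, div_pow, one_pow, Real.sq_sqrt (Nat.cast_nonneg N), mul_one_div_cancel hN]
    exact_mod_cast this
  rw [orthonormal_iff_ite]
  intro i j
  simp only [inner_gtrans_gtrans hχ, hcoeff, one_mul, hχ.sum_apply_mul_conj_apply]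

theorem translates_orthonormal_of_abs_eq_general {N : ℕ}
    (χ : Fin N → EuclideanSpace ℂ (Fin N)) (hχ : Orthonormal ℂ χ)
    (g : EuclideanSpace ℂ (Fin N))
    (hg : ∀ l : Fin N, ‖gft χ g l‖ = 1 / Real.sqrt N) :
    ∀ m : ℕ, ∀ hm : m ≤ N,
      Orthonormal ℂ (fun i : Fin m => gtrans χ (Fin.castLE hm i) g) :=
  fun _ hm => (orthonormal_gtrans hχ hg).comp _ (Fin.castLE_injective hm)

/-- If `|ĝ(l)| = 1/√N` for all `l`, then `{T_i g : 1 ≤ i ≤ m}` is an orthonormal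
system for every `m ≤ N`. -/
theorem translates_orthonormal_of_abs_eq {N : ℕ} (hN : 0 < N)
    (χ : Fin N → EuclideanSpace ℂ (Fin N)) (hχ : Orthonormal ℂ χ)
    (hspan : Submodule.span ℂ (Set.range χ) = ⊤)
    (g : EuclideanSpace ℂ (Fin N))
    (hg : ∀ l : Fin N, ‖gft χ g l‖ = 1 / Real.sqrt N) :
    ∀ m : ℕ, ∀ hm : m ≤ N,
      Orthonormal ℂ (fun i : Fin m => gtrans χ (Fin.castLE hm i) g) :=
  translates_orthonormal_of_abs_eq_general χ hχ g hg
end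

section
/- Let g ∈ ℂ^N and m ≤ N. If the collection {T_i g : 1 ≤ i ≤ m} is an orthonormal system in ℂ^N, then there exist m distinct indices l_1, …, l_m in {1, …, N} such that |ĝ(l_k)| > 0 for all k = 1, …, m. -/
open scoped ComplexConjugate BigOperators

theorem gtrans_mem_span_fourier_support {N : ℕ} (χ : Fin N → EuclideanSpace ℂ (Fin N))
    (i : Fin N) (f : EuclideanSpace ℂ (Fin N)) :
    gtrans χ i f ∈ Submodule.span ℂ (χ '' {l | gft χ f l ≠ 0}) := by
  rw [gtrans_eq_sum_smul]
  refine Submodule.sum_mem _ fun l _ => ?_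
  by_cases hl : gft χ f l = 0
  · simp [hl]
  · exact Submodule.smul_mem _ _ (Submodule.subset_span ⟨l, hl, rfl⟩)

theorem LinearIndependent.card_le_card_of_range_subset_span_image {R M ι κ : Type*}
    [DivisionRing R] [AddCommGroup M] [Module R M] [Fintype ι] {v : ι → M}
    (hv : LinearIndependent R v) (χ : κ → M) (s : Finset κ)
    (hvs : Set.range v ⊆ Submodule.span R (χ '' s)) :
    Fintype.card ι ≤ s.card := by
  classical
  calc Fintype.card ι = Module.finrank R (Submodule.span R (Set.range v)) :=
        (finrank_span_eq_card hv).symm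
    _ ≤ Module.finrank R (Submodule.span R ((s.image χ : Finset M) : Set M)) := by
        refine Submodule.finrank_mono (Submodule.span_le.mpr ?_)
        simpa using hvs
    _ ≤ (s.image χ).card := finrank_span_finset_le_card _
    _ ≤ s.card := Finset.card_image_le

theorem Finset.exists_injective_fin_forall_mem_of_le_card {α : Type*} {s : Finset α} {m : ℕ}
    (hm : m ≤ s.card) : ∃ l : Fin m → α, Function.Injective l ∧ ∀ k, l k ∈ s := by
  let e : Fin m ↪ s := (Fin.castLEEmb hm).trans s.equivFin.symm.toEmbedding
  exact ⟨fun k => e k, Subtype.val_injective.comp e.injective, fun k => (e k).2⟩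

theorem translates_orthonormal_necessary_general {N : ℕ}
    (χ : Fin N → EuclideanSpace ℂ (Fin N))
    (g : EuclideanSpace ℂ (Fin N)) (m : ℕ) (hm : m ≤ N)
    (hon : Orthonormal ℂ (fun i : Fin m => gtrans χ (Fin.castLE hm i) g)) :
    ∃ l : Fin m → Fin N, Function.Injective l ∧
      ∀ k : Fin m, 0 < ‖gft χ g (l k)‖ := by
  classical
  let support : Finset (Fin N) := {l | gft χ g l ≠ 0}
  have hcard : m ≤ support.card := by
    simpa using hon.linearIndependent.card_le_card_of_range_subset_span_image χ support
      (by rintro _ ⟨i, rfl⟩; simpa [support] using gtrans_mem_span_fourier_support χ _ g)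
  obtain ⟨l, hl_inj, hl_mem⟩ := Finset.exists_injective_fin_forall_mem_of_le_card hcard
  exact ⟨l, hl_inj, fun k => norm_pos_iff.mpr (by simpa [support] using hl_mem k)⟩

/-- If `{T_i g : 1 ≤ i ≤ m}` is an orthonormal system, then there exist `m` distinct
indices `l_1, …, l_m` with `|ĝ(l_k)| > 0`. -/
theorem translates_orthonormal_necessary {N : ℕ} (hN : 0 < N)
    (χ : Fin N → EuclideanSpace ℂ (Fin N)) (hχ : Orthonormal ℂ χ)
    (hspan : Submodule.span ℂ (Set.range χ) = ⊤)
    (g : EuclideanSpace ℂ (Fin N)) (m : ℕ) (hm : m ≤ N)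
    (hon : Orthonormal ℂ (fun i : Fin m => gtrans χ (Fin.castLE hm i) g)) :
    ∃ l : Fin m → Fin N, Function.Injective l ∧
      ∀ k : Fin m, 0 < ‖gft χ g (l k)‖ :=
  translates_orthonormal_necessary_general χ g m hm hon
end

section
/- Let λ_1, …, λ_N be real numbers, let G : ℝ → ℂ, let J be a finite subset of the positive reals, and for each s ∈ J let g_s ∈ ℂ^N be the vector whose graph Fourier transform satisfies ĝ_s(l) = G(s·λ_l) for all 1 ≤ l ≤ N (i.e., g_s is the dilation D_s g). Let A, B > 0. Then the spectral graph wavelet system {T_i g_s : 1 ≤ i ≤ N, s ∈ J} is a frame for ℂ^N with frame bounds A and B if and only if A/N ≤ Σ_{s∈J} |G(s·λ_l)|² ≤ B/N for all 1 ≤ l ≤ N. -/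
open scoped ComplexConjugate BigOperators

/-!
The coefficient `⟨f, T_i g⟩`, as a function of `i`, is the `i`-th coordinate of the vector
`∑_l √N · conj (ĝ l) · f̂ l · χ_l`, so orthonormality of `χ` gives
`∑_i |⟨f, T_i g⟩|² = N ∑_l |ĝ l|² |f̂ l|²`. Summing over the scales, the frame sum is a diagonal
form in the Fourier coefficients with weights `N ∑_s |G (s λ_l)|²`; by Parseval such a form lies
between `A ‖f‖²` and `B ‖f‖²` for all `f` iff every weight lies in `[A, B]` (test on `f = χ_l`).
-/

open scoped InnerProductSpace

section Orthonormal

variable {ι 𝕜 E : Type*} [RCLike 𝕜] [NormedAddCommGroup E] [InnerProductSpace 𝕜 E]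

theorem Orthonormal.sq_norm_sum_smul {v : ι → E} (hv : Orthonormal 𝕜 v) (c : ι → 𝕜)
    (s : Finset ι) : ‖∑ i ∈ s, c i • v i‖ ^ 2 = ∑ i ∈ s, ‖c i‖ ^ 2 := by
  apply RCLike.ofReal_injective (K := 𝕜)
  push_cast
  rw [← inner_self_eq_norm_sq_to_K, hv.inner_sum]
  simp [RCLike.conj_mul]

theorem OrthonormalBasis.forall_bounds_sum_mul_sq_norm_inner_iff [Fintype ι]
    (b : OrthonormalBasis ι 𝕜 E) (w : ι → ℝ) (A B : ℝ) :
    (∀ f, A * ‖f‖ ^ 2 ≤ ∑ l, w l * ‖⟪b l, f⟫_𝕜‖ ^ 2 ∧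
        ∑ l, w l * ‖⟪b l, f⟫_𝕜‖ ^ 2 ≤ B * ‖f‖ ^ 2) ↔
      ∀ l, A ≤ w l ∧ w l ≤ B := by
  classical
  refine ⟨fun h l => ?_, fun h f => ?_⟩
  · simpa [b.inner_eq_ite, apply_ite] using h (b l)
  · simp_rw [← b.sum_sq_norm_inner_right f, Finset.mul_sum]
    exact ⟨Finset.sum_le_sum fun l _ => by gcongr; exact (h l).1,
      Finset.sum_le_sum fun l _ => by gcongr; exact (h l).2⟩

end Orthonormal

section GraphFourier

variable {N : ℕ} (χ : Fin N → EuclideanSpace ℂ (Fin N))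

theorem gft_apply (f : EuclideanSpace ℂ (Fin N)) (l : Fin N) : gft χ f l = ⟪χ l, f⟫_ℂ := by
  simp [gft, PiLp.inner_apply]

theorem sum_mul_conj_gtrans (i : Fin N) (f g : EuclideanSpace ℂ (Fin N)) :
    ∑ n, f n * conj (gtrans χ i g n) =
      (∑ l, ((Real.sqrt N : ℂ) * conj (gft χ g l) * gft χ f l) • χ l) i := by
  have hf : ∀ l, gft χ f l = ∑ n, f n * conj (χ l n) := fun _ => rfl
  simp only [gtrans, hf, map_mul, map_sum, Complex.conj_conj, Complex.conj_ofReal,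
    WithLp.ofLp_sum, WithLp.ofLp_smul, Finset.sum_apply, Pi.smul_apply, smul_eq_mul,
    Finset.mul_sum, Finset.sum_mul]
  rw [Finset.sum_comm]
  exact Finset.sum_congr rfl fun l _ => Finset.sum_congr rfl fun n _ => by ring

theorem sum_sq_norm_sum_mul_conj_gtrans (hχ : Orthonormal ℂ χ)
    (f g : EuclideanSpace ℂ (Fin N)) :
    ∑ i, ‖∑ n, f n * conj (gtrans χ i g n)‖ ^ 2 =
      N * ∑ l, ‖gft χ g l‖ ^ 2 * ‖gft χ f l‖ ^ 2 := by
  simp_rw [sum_mul_conj_gtrans, ← EuclideanSpace.norm_sq_eq, hχ.sq_norm_sum_smul, norm_mul,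
    mul_pow, RCLike.norm_conj, Complex.norm_real, Real.norm_eq_abs, sq_abs,
    Real.sq_sqrt (Nat.cast_nonneg N), Finset.mul_sum, mul_assoc]

end GraphFourier

theorem wavelet_system_frame_iff_general {N : ℕ}
    (χ : Fin N → EuclideanSpace ℂ (Fin N)) (hχ : Orthonormal ℂ χ)
    (hspan : Submodule.span ℂ (Set.range χ) = ⊤)
    (lam : Fin N → ℝ) (G : ℝ → ℂ) (J : Finset ℝ)
    (g : ℝ → EuclideanSpace ℂ (Fin N))
    (hg : ∀ s ∈ J, ∀ l : Fin N, gft χ (g s) l = G (s * lam l))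
    (A B : ℝ) :
    (∀ f : EuclideanSpace ℂ (Fin N),
        A * ‖f‖ ^ 2 ≤ ∑ i : Fin N, ∑ s ∈ J,
            ‖∑ n, f n * conj (gtrans χ i (g s) n)‖ ^ 2 ∧
        ∑ i : Fin N, ∑ s ∈ J,
            ‖∑ n, f n * conj (gtrans χ i (g s) n)‖ ^ 2 ≤ B * ‖f‖ ^ 2) ↔
    (∀ l : Fin N,
        A / N ≤ ∑ s ∈ J, ‖G (s * lam l)‖ ^ 2 ∧
        ∑ s ∈ J, ‖G (s * lam l)‖ ^ 2 ≤ B / N) := by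
  let b := OrthonormalBasis.mk hχ hspan.ge
  have hb : ∀ l, b l = χ l := congrFun (OrthonormalBasis.coe_mk hχ _)
  have frame_sum : ∀ f : EuclideanSpace ℂ (Fin N),
      ∑ i : Fin N, ∑ s ∈ J, ‖∑ n, f n * conj (gtrans χ i (g s) n)‖ ^ 2 =
        ∑ l, ((N : ℝ) * ∑ s ∈ J, ‖G (s * lam l)‖ ^ 2) * ‖⟪b l, f⟫_ℂ‖ ^ 2 := by
    intro f
    calc _ = ∑ s ∈ J, (N : ℝ) * ∑ l, ‖G (s * lam l)‖ ^ 2 * ‖gft χ f l‖ ^ 2 := by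
          rw [Finset.sum_comm]
          refine Finset.sum_congr rfl fun s hs => ?_
          simp only [sum_sq_norm_sum_mul_conj_gtrans χ hχ, hg s hs]
      _ = _ := by
          simp_rw [hb, ← gft_apply, Finset.mul_sum, Finset.sum_mul, mul_assoc]
          exact Finset.sum_comm
  simp_rw [frame_sum, b.forall_bounds_sum_mul_sq_norm_inner_iff]
  refine forall_congr' fun l => ?_
  have hN : (0 : ℝ) < N := Nat.cast_pos.mpr l.pos
  rw [div_le_iff₀' hN, le_div_iff₀' hN]

/-- The spectral graph wavelet system `{T_i D_s g : 1 ≤ i ≤ N, s ∈ J}` is a frame for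
`ℂ^N` with frame bounds `A, B` iff `A/N ≤ ∑_{s∈J} |G(s·λ_l)|² ≤ B/N` for all `l`. -/
theorem wavelet_system_frame_iff {N : ℕ} (hN : 0 < N)
    (χ : Fin N → EuclideanSpace ℂ (Fin N)) (hχ : Orthonormal ℂ χ)
    (hspan : Submodule.span ℂ (Set.range χ) = ⊤)
    (lam : Fin N → ℝ) (G : ℝ → ℂ) (J : Finset ℝ) (hJ : ∀ s ∈ J, 0 < s)
    (g : ℝ → EuclideanSpace ℂ (Fin N))
    (hg : ∀ s ∈ J, ∀ l : Fin N, gft χ (g s) l = G (s * lam l))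
    (A B : ℝ) (hA : 0 < A) (hB : 0 < B) :
    (∀ f : EuclideanSpace ℂ (Fin N),
        A * ‖f‖ ^ 2 ≤ ∑ i : Fin N, ∑ s ∈ J,
            ‖∑ n, f n * conj (gtrans χ i (g s) n)‖ ^ 2 ∧
        ∑ i : Fin N, ∑ s ∈ J,
            ‖∑ n, f n * conj (gtrans χ i (g s) n)‖ ^ 2 ≤ B * ‖f‖ ^ 2) ↔
    (∀ l : Fin N,
        A / N ≤ ∑ s ∈ J, ‖G (s * lam l)‖ ^ 2 ∧
        ∑ s ∈ J, ‖G (s * lam l)‖ ^ 2 ≤ B / N) :=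
  wavelet_system_frame_iff_general χ hχ hspan lam G J g hg A B
end

section
/- Let g ∈ ℂ^N and A, B > 0. The family {T_i M_s g : 1 ≤ i ≤ N, 1 ≤ s ≤ N} is a frame for ℂ^N with frame bounds A and B if and only if A/N ≤ Σ_{n=1}^N |χ_l(n)|² · |g(n)|² ≤ B/N for all 1 ≤ l ≤ N. -/
open scoped ComplexConjugate BigOperators

/-- Generalized modulation: `(M_s f)(n) = χ_s(n) · f(n)`. -/
noncomputable def gmod {N : ℕ} (χ : Fin N → EuclideanSpace ℂ (Fin N))
    (s : Fin N) (f : EuclideanSpace ℂ (Fin N)) : EuclideanSpace ℂ (Fin N) :=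
  WithLp.toLp 2 (fun n => χ s n * f n)


/-!
In the orthonormal basis `χ` the frame operator of `{T_i M_s g}` is diagonal. Expanding
`⟨f, T_i h⟩ = √N ∑_l conj (ĥ l) f̂ l χ_l(i)` and summing `|·|²` over `i` uses that the rows of the
unitary matrix `(χ_l(n))` are orthonormal; summing `|(M_s g)^(l)|²` over `s` uses that its
columns are. Together,
`∑_{i,s} |⟨f, T_i M_s g⟩|² = ∑_l N (∑_n |χ_l(n)|² |g(n)|²) |f̂ l|²`,
and by Parseval such a diagonal form lies between `A ‖f‖²` and `B ‖f‖²` for all `f` exactly when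
every weight lies in `[A, B]` (test it on `f = χ_l`).
-/

open scoped InnerProductSpace

namespace OrthonormalBasis

variable {ι κ 𝕜 E : Type*} [Fintype ι] [Fintype κ] [RCLike 𝕜]

theorem sum_sq_norm_sum_mul_apply (b : OrthonormalBasis ι 𝕜 (EuclideanSpace 𝕜 κ)) (a : ι → 𝕜) :
    ∑ k, ‖∑ i, a i * b i k‖ ^ 2 = ∑ i, ‖a i‖ ^ 2 := by
  have hsum : ∑ i, a i • b i = b.repr.symm (WithLp.toLp 2 a) := b.sum_repr_symm _
  have := congrArg (‖·‖ ^ 2) hsum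
  simp only [LinearIsometryEquiv.norm_map, EuclideanSpace.norm_sq_eq] at this
  simpa [WithLp.ofLp_sum] using this

theorem sum_sq_norm_sum_apply_mul (b : OrthonormalBasis ι 𝕜 (EuclideanSpace 𝕜 κ)) (w : κ → 𝕜) :
    ∑ i, ‖∑ k, b i k * w k‖ ^ 2 = ∑ k, ‖w k‖ ^ 2 := by
  have hinner : ∀ i, ∑ k, b i k * w k = ⟪WithLp.toLp 2 (star w), b i⟫_𝕜 := fun i => by
    simp [PiLp.inner_apply, mul_comm]
  simp_rw [hinner, b.sum_sq_norm_inner_left, EuclideanSpace.norm_sq_eq]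
  simp

variable [NormedAddCommGroup E] [InnerProductSpace 𝕜 E]

theorem forall_le_sum_mul_sq_norm_inner_le_iff (b : OrthonormalBasis ι 𝕜 E) (w : ι → ℝ)
    (A B : ℝ) :
    (∀ f : E, A * ‖f‖ ^ 2 ≤ ∑ i, w i * ‖⟪b i, f⟫_𝕜‖ ^ 2 ∧
        ∑ i, w i * ‖⟪b i, f⟫_𝕜‖ ^ 2 ≤ B * ‖f‖ ^ 2) ↔
      ∀ i, A ≤ w i ∧ w i ≤ B := by
  classical
  constructor
  · intro h i
    have hcollapse : ∑ j, w j * ‖⟪b j, b i⟫_𝕜‖ ^ 2 = w i := by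
      simp [orthonormal_iff_ite.mp b.orthonormal, apply_ite]
    simpa [hcollapse, b.norm_eq_one i] using h (b i)
  · intro h f
    rw [← b.sum_sq_norm_inner_right f, Finset.mul_sum, Finset.mul_sum]
    exact ⟨Finset.sum_le_sum fun i _ => by gcongr; exact (h i).1,
      Finset.sum_le_sum fun i _ => by gcongr; exact (h i).2⟩

end OrthonormalBasis

theorem EuclideanSpace.sum_mul_conj_eq_inner {κ 𝕜 : Type*} [Fintype κ] [RCLike 𝕜]
    (f v : EuclideanSpace 𝕜 κ) : ∑ n, f n * conj (v n) = ⟪v, f⟫_𝕜 := by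
  simp [PiLp.inner_apply]

section GraphSignal

variable {N : ℕ}

theorem gft_apply_eq_inner (χ : Fin N → EuclideanSpace ℂ (Fin N)) (f : EuclideanSpace ℂ (Fin N))
    (l : Fin N) : gft χ f l = ⟪χ l, f⟫_ℂ :=
  EuclideanSpace.sum_mul_conj_eq_inner f (χ l)

theorem inner_gtrans (χ : Fin N → EuclideanSpace ℂ (Fin N)) (i : Fin N)
    (h f : EuclideanSpace ℂ (Fin N)) :
    ⟪gtrans χ i h, f⟫_ℂ = (Real.sqrt N : ℂ) * ∑ l, conj (gft χ h l) * gft χ f l * χ l i := by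
  rw [← EuclideanSpace.sum_mul_conj_eq_inner]
  simp only [gtrans, gft, PiLp.toLp_apply, map_mul, map_sum, Complex.conj_conj,
    Complex.conj_ofReal, Finset.mul_sum, Finset.sum_mul]
  rw [Finset.sum_comm]
  refine Finset.sum_congr rfl fun l _ => Finset.sum_congr rfl fun n _ =>
    Finset.sum_congr rfl fun k _ => by ring

theorem gft_gmod_apply (χ : Fin N → EuclideanSpace ℂ (Fin N)) (s : Fin N)
    (g : EuclideanSpace ℂ (Fin N)) (l : Fin N) :
    gft χ (gmod χ s g) l = ∑ n, χ s n * (g n * conj (χ l n)) := by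
  simp only [gft, gmod, PiLp.toLp_apply, mul_assoc]

variable (b : OrthonormalBasis (Fin N) ℂ (EuclideanSpace ℂ (Fin N)))

theorem sum_sq_norm_gft_gmod (g : EuclideanSpace ℂ (Fin N)) (l : Fin N) :
    ∑ s, ‖gft b (gmod b s g) l‖ ^ 2 = ∑ n, ‖b l n‖ ^ 2 * ‖g n‖ ^ 2 := by
  simp_rw [gft_gmod_apply, b.sum_sq_norm_sum_apply_mul, norm_mul, RCLike.norm_conj]
  exact Finset.sum_congr rfl fun n _ => by ring

theorem sum_sq_norm_inner_gtrans (h f : EuclideanSpace ℂ (Fin N)) :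
    ∑ i, ‖⟪gtrans b i h, f⟫_ℂ‖ ^ 2 = N * ∑ l, ‖gft b h l‖ ^ 2 * ‖gft b f l‖ ^ 2 := by
  simp_rw [inner_gtrans, norm_mul, mul_pow, ← Finset.mul_sum, b.sum_sq_norm_sum_mul_apply,
    norm_mul, RCLike.norm_conj, mul_pow, Complex.norm_real, Real.norm_eq_abs, sq_abs,
    Real.sq_sqrt (Nat.cast_nonneg N)]

theorem sum_sq_norm_inner_gtrans_gmod (g f : EuclideanSpace ℂ (Fin N)) :
    ∑ i, ∑ s, ‖⟪gtrans b i (gmod b s g), f⟫_ℂ‖ ^ 2 =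
      ∑ l, (N * ∑ n, ‖b l n‖ ^ 2 * ‖g n‖ ^ 2) * ‖⟪b l, f⟫_ℂ‖ ^ 2 := by
  rw [Finset.sum_comm]
  simp_rw [sum_sq_norm_inner_gtrans, ← Finset.mul_sum]
  rw [Finset.sum_comm]
  simp_rw [← Finset.sum_mul, sum_sq_norm_gft_gmod, gft_apply_eq_inner]
  rw [Finset.mul_sum]
  simp_rw [mul_assoc]

end GraphSignal

theorem modulated_translates_frame_iff_general {N : ℕ}
    (χ : Fin N → EuclideanSpace ℂ (Fin N)) (hχ : Orthonormal ℂ χ)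
    (g : EuclideanSpace ℂ (Fin N)) (A B : ℝ) :
    (∀ f : EuclideanSpace ℂ (Fin N),
        A * ‖f‖ ^ 2 ≤ ∑ i : Fin N, ∑ s : Fin N,
            ‖∑ n, f n * conj (gtrans χ i (gmod χ s g) n)‖ ^ 2 ∧
        ∑ i : Fin N, ∑ s : Fin N,
            ‖∑ n, f n * conj (gtrans χ i (gmod χ s g) n)‖ ^ 2 ≤ B * ‖f‖ ^ 2) ↔
    (∀ l : Fin N,
        A / N ≤ ∑ n : Fin N, ‖χ l n‖ ^ 2 * ‖g n‖ ^ 2 ∧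
        ∑ n : Fin N, ‖χ l n‖ ^ 2 * ‖g n‖ ^ 2 ≤ B / N) := by
  obtain ⟨b, rfl⟩ : ∃ b : OrthonormalBasis (Fin N) ℂ (EuclideanSpace ℂ (Fin N)), ⇑b = χ :=
    ⟨.mk hχ (hχ.linearIndependent.span_eq_top_of_card_eq_finrank' (by simp)).ge, by simp⟩
  simp_rw [EuclideanSpace.sum_mul_conj_eq_inner, sum_sq_norm_inner_gtrans_gmod,
    b.forall_le_sum_mul_sq_norm_inner_le_iff]
  refine forall_congr' fun l => ?_
  have hN : (0 : ℝ) < N := by exact_mod_cast l.pos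
  rw [div_le_iff₀' hN, le_div_iff₀' hN]

/-- `{T_i M_s g : 1 ≤ i, s ≤ N}` is a frame for `ℂ^N` with frame bounds `A, B`
iff `A/N ≤ ∑_n |χ_l(n)|²·|g(n)|² ≤ B/N` for all `l`. -/
theorem modulated_translates_frame_iff {N : ℕ} (hN : 0 < N)
    (χ : Fin N → EuclideanSpace ℂ (Fin N)) (hχ : Orthonormal ℂ χ)
    (hspan : Submodule.span ℂ (Set.range χ) = ⊤)
    (g : EuclideanSpace ℂ (Fin N)) (A B : ℝ) (hA : 0 < A) (hB : 0 < B) :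
    (∀ f : EuclideanSpace ℂ (Fin N),
        A * ‖f‖ ^ 2 ≤ ∑ i : Fin N, ∑ s : Fin N,
            ‖∑ n, f n * conj (gtrans χ i (gmod χ s g) n)‖ ^ 2 ∧
        ∑ i : Fin N, ∑ s : Fin N,
            ‖∑ n, f n * conj (gtrans χ i (gmod χ s g) n)‖ ^ 2 ≤ B * ‖f‖ ^ 2) ↔
    (∀ l : Fin N,
        A / N ≤ ∑ n : Fin N, ‖χ l n‖ ^ 2 * ‖g n‖ ^ 2 ∧
        ∑ n : Fin N, ‖χ l n‖ ^ 2 * ‖g n‖ ^ 2 ≤ B / N) :=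
  modulated_translates_frame_iff_general χ hχ g A B
end
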